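/- There exists an absolute constant C > 0 such that for all real x ≥ 2 and all integers n with 2 ≤ n ≤ x, one has |∫₀^1 (2·x^u/(x^u + 1)²)·sinh(u·log(x/n)) du − (1/log x)·F(log(x/n)/log x)| ≤ C/(n·log n). -/

import Mathlib

/-!
Substituting `y = u log x / 2` turns the weight `2 x^u / (x^u + 1)^2` into `1 / (2 cosh² y)`, so the
integral over `u ∈ [0, 1]` is `(1 / log x)` times the part of the integral defining
`F (log (x/n) / log x)` over `y ∈ (0, log x / 2]`. The remaining tail is bounded through
`sinh (2 v y) / cosh² y ≤ 2 exp (-2 (1 - v) y)`; with `v = log (x/n) / log x` we have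
`(1 - v) log x = log n`, so the tail is at most `1 / (n log n)`.
-/

noncomputable def F (u : ℝ) : ℝ :=
  ∫ y in Set.Ioi (0 : ℝ), Real.sinh (2 * u * y) / Real.cosh y ^ 2

open MeasureTheory Real Set

section SinhDivCoshSq

variable {v y a : ℝ}

lemma sinh_div_cosh_sq_le (v y : ℝ) :
    sinh (2 * v * y) / cosh y ^ 2 ≤ 2 * exp (-(2 * (1 - v)) * y) := by
  have hsinh : sinh (2 * v * y) ≤ exp (2 * v * y) / 2 := by
    rw [sinh_eq]; linarith [exp_pos (-(2 * v * y))]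
  have hcosh : exp y / 2 ≤ cosh y := by
    rw [cosh_eq]; linarith [exp_pos (-y)]
  have hcosh_sq : exp (2 * y) / 4 ≤ cosh y ^ 2 := by
    calc exp (2 * y) / 4 = (exp y / 2) ^ 2 := by rw [two_mul, exp_add]; ring
      _ ≤ cosh y ^ 2 := pow_le_pow_left₀ (by positivity) hcosh 2
  calc sinh (2 * v * y) / cosh y ^ 2 ≤ (exp (2 * v * y) / 2) / (exp (2 * y) / 4) :=
        div_le_div₀ (by positivity) hsinh (by positivity) hcosh_sq
    _ = 2 * exp (-(2 * (1 - v)) * y) := by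
        rw [show -(2 * (1 - v)) * y = 2 * v * y - 2 * y by ring, exp_sub]
        field_simp
        ring

lemma abs_sinh_div_cosh_sq_le (hv : 0 ≤ v) (hy : 0 ≤ y) :
    |sinh (2 * v * y) / cosh y ^ 2| ≤ 2 * exp (-(2 * (1 - v)) * y) := by
  have hsinh : 0 ≤ sinh (2 * v * y) := sinh_nonneg_iff.mpr (by positivity)
  rw [abs_of_nonneg (by positivity)]
  exact sinh_div_cosh_sq_le v y

lemma norm_sinh_div_cosh_sq_le_ae_Ioi (hv : 0 ≤ v) (ha : 0 ≤ a) :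
    ∀ᵐ y ∂volume.restrict (Ioi a),
      ‖sinh (2 * v * y) / cosh y ^ 2‖ ≤ 2 * exp (-(2 * (1 - v)) * y) := by
  filter_upwards [ae_restrict_mem measurableSet_Ioi] with y hy
  exact abs_sinh_div_cosh_sq_le hv (ha.trans hy.le)

lemma integrableOn_exp_decay_Ioi (hv : v < 1) (a : ℝ) :
    IntegrableOn (fun y ↦ 2 * exp (-(2 * (1 - v)) * y)) (Ioi a) :=
  (exp_neg_integrableOn_Ioi a (by linarith)).const_mul 2

lemma integrableOn_sinh_div_cosh_sq_Ioi (hv₀ : 0 ≤ v) (hv₁ : v < 1) (ha : 0 ≤ a) :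
    IntegrableOn (fun y ↦ sinh (2 * v * y) / cosh y ^ 2) (Ioi a) := by
  have hcont : Continuous fun y ↦ sinh (2 * v * y) / cosh y ^ 2 :=
    (continuous_sinh.comp (continuous_const.mul continuous_id)).div
      (continuous_cosh.pow 2) fun y ↦ by positivity
  exact (integrableOn_exp_decay_Ioi hv₁ a).mono' hcont.aestronglyMeasurable
    (norm_sinh_div_cosh_sq_le_ae_Ioi hv₀ ha)

lemma abs_setIntegral_Ioi_sinh_div_cosh_sq_le (hv₀ : 0 ≤ v) (hv₁ : v < 1) (ha : 0 ≤ a) :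
    |∫ y in Ioi a, sinh (2 * v * y) / cosh y ^ 2| ≤ exp (-(2 * (1 - v)) * a) / (1 - v) := by
  have h1v : 0 < 1 - v := by linarith
  calc |∫ y in Ioi a, sinh (2 * v * y) / cosh y ^ 2|
      ≤ ∫ y in Ioi a, 2 * exp (-(2 * (1 - v)) * y) :=
        norm_integral_le_of_norm_le (integrableOn_exp_decay_Ioi hv₁ a)
          (norm_sinh_div_cosh_sq_le_ae_Ioi hv₀ ha)
    _ = exp (-(2 * (1 - v)) * a) / (1 - v) := by
        rw [integral_const_mul, integral_exp_mul_Ioi (by linarith)]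
        field_simp

lemma F_eq_intervalIntegral_add_setIntegral_Ioi (hv₀ : 0 ≤ v) (hv₁ : v < 1) (ha : 0 ≤ a) :
    F v = (∫ y in (0 : ℝ)..a, sinh (2 * v * y) / cosh y ^ 2)
      + ∫ y in Ioi a, sinh (2 * v * y) / cosh y ^ 2 := by
  have hint := integrableOn_sinh_div_cosh_sq_Ioi hv₀ hv₁ le_rfl
  rw [F, intervalIntegral.integral_of_le ha, ← Ioc_union_Ioi_eq_Ioi ha,
    setIntegral_union (Ioc_disjoint_Ioi le_rfl) measurableSet_Ioi
      (hint.mono_set Ioc_subset_Ioi_self) (integrableOn_sinh_div_cosh_sq_Ioi hv₀ hv₁ ha)]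

end SinhDivCoshSq

lemma two_mul_exp_div_exp_add_one_sq (t : ℝ) :
    2 * exp t / (exp t + 1) ^ 2 = 1 / 2 / cosh (t / 2) ^ 2 := by
  have hs : exp t = exp (t / 2) ^ 2 := by rw [← exp_nat_mul]; ring_nf
  rw [hs, cosh_eq, exp_neg]
  have : 0 < exp (t / 2) := exp_pos _
  field_simp

lemma intervalIntegral_rpow_weight_mul_sinh {x : ℝ} (hx : 1 < x) (w : ℝ) :
    ∫ u in (0 : ℝ)..1, 2 * x ^ u / (x ^ u + 1) ^ 2 * sinh (u * w)
      = 1 / log x * ∫ y in (0 : ℝ)..log x / 2, sinh (2 * (w / log x) * y) / cosh y ^ 2 := by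
  have hL : 0 < log x := log_pos hx
  have hpoint : ∀ u : ℝ, 2 * x ^ u / (x ^ u + 1) ^ 2 * sinh (u * w)
      = 1 / 2 * (sinh (2 * (w / log x) * (u * (log x / 2))) / cosh (u * (log x / 2)) ^ 2) := by
    intro u
    rw [rpow_def_of_pos (by linarith), two_mul_exp_div_exp_add_one_sq]
    field_simp
  simp_rw [hpoint, intervalIntegral.integral_const_mul]
  rw [intervalIntegral.integral_comp_mul_right
      (fun y ↦ sinh (2 * (w / log x) * y) / cosh y ^ 2) (by positivity),
    zero_mul, one_mul, smul_eq_mul, ← mul_assoc]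
  congr 1
  field_simp

theorem weight_integral_approx :
    ∃ C : ℝ, 0 < C ∧ ∀ x : ℝ, ∀ n : ℕ, 2 ≤ x → 2 ≤ n → (n : ℝ) ≤ x →
      |(∫ u in (0 : ℝ)..1,
          (2 * x ^ u / (x ^ u + 1) ^ 2) * Real.sinh (u * Real.log (x / n)))
        - (1 / Real.log x) * F (Real.log (x / n) / Real.log x)| ≤
        C / (n * Real.log n) := by
  refine ⟨1, one_pos, fun x n hx hn hnx ↦ ?_⟩
  have hn₁ : (1 : ℝ) < n := by exact_mod_cast hn
  have hLn : 0 < log n := log_pos hn₁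
  have hLx : 0 < log x := log_pos (by linarith)
  have hlog_div : log (x / n) = log x - log n := log_div (by positivity) (by positivity)
  rw [intervalIntegral_rpow_weight_mul_sinh (by linarith)]
  set v := log (x / n) / log x
  have h1v : 1 - v = log n / log x := by
    rw [eq_div_iff hLx.ne', sub_mul, div_mul_cancel₀ _ hLx.ne', hlog_div]
    ring
  have hv₀ : 0 ≤ v := div_nonneg (by rw [hlog_div]; linarith [log_le_log (by positivity) hnx])
    hLx.le
  have hv₁ : v < 1 := by linarith [div_pos hLn hLx]
  have htail : exp (-(2 * (1 - v)) * (log x / 2)) = (n : ℝ)⁻¹ := by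
    rw [h1v, show -(2 * (log n / log x)) * (log x / 2) = -log n by field_simp, exp_neg,
      exp_log (by positivity)]
  rw [F_eq_intervalIntegral_add_setIntegral_Ioi hv₀ hv₁ (a := log x / 2) (by positivity), mul_add,
    sub_add_cancel_left, abs_neg, abs_mul, abs_of_pos (by positivity)]
  calc 1 / log x * |∫ y in Ioi (log x / 2), sinh (2 * v * y) / cosh y ^ 2|
      ≤ 1 / log x * ((n : ℝ)⁻¹ / (log n / log x)) := by
        rw [← htail, ← h1v]
        gcongr
        exact abs_setIntegral_Ioi_sinh_div_cosh_sq_le hv₀ hv₁ (by positivity)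
    _ = 1 / (n * log n) := by field_simp
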